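/- arXiv:2103.08846 — 2 statements merged into one kernel-verified Lean document; each statement's English description precedes it below -/
import Mathlib

section
/- Let K be a negative binomial random variable with parameters r ≥ 1 and p ∈ (0,1), q = 1 - p, and let A ⊆ ℝ be Borel. Then |E[(K - rp/q)^3·1_{K∈A}] - (rp/q^2)·(1+p)/q| ≤ C_p · r^{3/2} · (P(K ∈ Aᶜ))^{1/2}, where C_p depends only on p. -/
noncomputable def negBinPMF (r p : ℝ) (k : ℕ) : ℝ :=
  Real.Gamma (r + k) / (Real.Gamma r * (Nat.factorial k)) * (1 - p) ^ r * p ^ k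

/-!
Put `t = p / (1 - p)` and `μ = r t`. Shifting the index by `j` turns `k ↦ P(K = k) k(k-1)⋯(k-j+1)`
into `r(r+1)⋯(r+j-1) tʲ` times the law of `NB(r + j, p)`, so the factorial moments of `K` are
`r(r+1)⋯(r+j-1) tʲ`. Expanding `(K - μ)ⁿ` in falling factorials gives
`E[(K - μ)³] = r t (1 + t)(1 + 2t)`, the stated constant, and `E[(K - μ)⁶] ≤ C r³` for `r ≥ 1`.
Writing `1_A = 1 - 1_Aᶜ`, the error is `-E[(K - μ)³ 1_Aᶜ]`, which Cauchy–Schwarz bounds by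
`√E[(K - μ)⁶] · √P(K ∈ Aᶜ)`.
-/

open Finset Polynomial

theorem Real.Gamma_add_nat_eq_mul_ascPochhammer {r : ℝ} (hr : ∀ k : ℕ, r + k ≠ 0) (n : ℕ) :
    Real.Gamma (r + n) = Real.Gamma r * (ascPochhammer ℝ n).eval r := by
  induction n with
  | zero => simp
  | succ n ih =>
    rw [Nat.cast_succ, ← add_assoc, Real.Gamma_add_one (hr n), ih, ascPochhammer_succ_eval]
    ring

theorem summable_and_abs_tsum_mul_le_sqrt_mul_sqrt {ι : Type*} {w f g : ι → ℝ} {a b : ℝ}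
    (hw : ∀ i, 0 ≤ w i) (hf : HasSum (fun i => w i * f i ^ 2) a)
    (hg : HasSum (fun i => w i * g i ^ 2) b) :
    Summable (fun i => w i * f i * g i) ∧ |∑' i, w i * f i * g i| ≤ √a * √b := by
  have hsq : ∀ h : ι → ℝ, ∀ i, (√(w i) * |h i|) ^ (2 : ℝ) = w i * h i ^ 2 := fun h i => by
    rw [Real.rpow_two, mul_pow, Real.sq_sqrt (hw i), sq_abs]
  obtain ⟨hsum, hle⟩ := Real.summable_and_inner_le_Lp_mul_Lq_tsum_of_nonneg
    Real.HolderConjugate.two_two (f := fun i => √(w i) * |f i|) (g := fun i => √(w i) * |g i|)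
    (fun i => by positivity) (fun i => by positivity)
    (by simpa only [hsq] using hf.summable) (by simpa only [hsq] using hg.summable)
  have habs : ∀ i, √(w i) * |f i| * (√(w i) * |g i|) = |w i * f i * g i| := fun i => by
    rw [abs_mul, abs_mul, abs_of_nonneg (hw i)]
    linear_combination (|f i| * |g i|) * Real.mul_self_sqrt (hw i)
  simp only [hsq, habs, hf.tsum_eq, hg.tsum_eq, ← Real.sqrt_eq_rpow] at hsum hle
  refine ⟨hsum.of_abs, le_trans ?_ hle⟩
  simpa only [Real.norm_eq_abs] using norm_tsum_le_tsum_norm (f := fun i => w i * f i * g i)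
    (by simpa only [Real.norm_eq_abs] using hsum)

theorem summable_and_abs_tsum_mul_indicator_le {ι : Type*} {w Y : ι → ℝ} {a : ℝ} (s : Set ι)
    (hw : ∀ i, 0 ≤ w i) (hws : Summable w) (hY : HasSum (fun i => w i * Y i ^ 2) a) :
    Summable (fun i => w i * Y i * s.indicator (fun _ => 1) i)
      ∧ |∑' i, w i * Y i * s.indicator (fun _ => 1) i|
        ≤ √a * √(∑' i, w i * s.indicator (fun _ => 1) i) := by
  have hχ : ∀ i, s.indicator (fun _ => (1 : ℝ)) i ^ 2 = s.indicator (fun _ => 1) i := fun i => by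
    by_cases h : i ∈ s <;> simp [h]
  refine summable_and_abs_tsum_mul_le_sqrt_mul_sqrt hw hY ?_
  simp only [hχ]
  refine (Summable.of_nonneg_of_le (fun i => mul_nonneg (hw i) ?_) (fun i => ?_) hws).hasSum
  · exact Set.indicator_nonneg (fun _ _ => zero_le_one) _
  · exact mul_le_of_le_one_right (hw i) (Set.indicator_le_self' (fun _ _ => zero_le_one) _)

lemma negBinPMF_eq_multichoose {r : ℝ} (hr : 0 < r) (p : ℝ) (k : ℕ) :
    negBinPMF r p k = (1 - p) ^ r * (Ring.multichoose r k * p ^ k) := by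
  have hfact : (k.factorial : ℝ) * Ring.multichoose r k = (ascPochhammer ℝ k).eval r := by
    rw [← ascPochhammer_smeval_eq_eval, ← Ring.factorial_nsmul_multichoose_eq_ascPochhammer,
      nsmul_eq_mul]
  have hΓ := Real.Gamma_add_nat_eq_mul_ascPochhammer (fun k => (by positivity : r + k ≠ 0)) k
  have hΓr := (Real.Gamma_pos_of_pos hr).ne'
  rw [negBinPMF, hΓ, ← hfact]
  field_simp

lemma negBinPMF_nonneg {r p : ℝ} (hr : 0 < r) (hp0 : 0 ≤ p) (hp1 : p ≤ 1) (k : ℕ) :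
    0 ≤ negBinPMF r p k := by
  have := Real.Gamma_pos_of_pos hr
  have := Real.Gamma_pos_of_pos (by positivity : 0 < r + k)
  have := Real.rpow_nonneg (sub_nonneg.2 hp1) r
  unfold negBinPMF
  positivity

theorem hasSum_negBinPMF {r p : ℝ} (hr : 0 < r) (hp : |p| < 1) : HasSum (negBinPMF r p) 1 := by
  have hseries := (Real.one_div_one_sub_rpow_hasFPowerSeriesOnBall_zero r).hasSum
    (y := p) (by simpa [enorm_eq_nnnorm, ← NNReal.coe_lt_coe] using hp)
  simp only [FormalMultilinearSeries.ofScalars_apply_eq, smul_eq_mul, zero_add] at hseries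
  have hq : 0 < 1 - p := by linarith [le_abs_self p]
  have hpmf : negBinPMF r p = fun k : ℕ => (1 - p) ^ r * (Ring.choose (r + k - 1) k * p ^ k) := by
    ext k
    rw [negBinPMF_eq_multichoose hr, Ring.multichoose_eq]
  have hsum := hseries.mul_left ((1 - p) ^ r)
  rwa [mul_one_div_cancel (Real.rpow_pos_of_pos hq r).ne', ← hpmf] at hsum

lemma negBinPMF_add_mul_descPochhammer {r p : ℝ} (hr : 0 < r) (hp : p < 1) (m j : ℕ) :
    negBinPMF r p (m + j) * (descPochhammer ℝ j).eval ((m + j : ℕ) : ℝ)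
      = (ascPochhammer ℝ j).eval r * (p / (1 - p)) ^ j * negBinPMF (r + j) p m := by
  have hq : 0 < 1 - p := by linarith
  have hfact : ((m.factorial : ℕ) : ℝ) * (m + j).descFactorial j = (m + j).factorial := by
    have h := Nat.factorial_mul_descFactorial (show j ≤ m + j by omega)
    rw [Nat.add_sub_cancel] at h
    exact_mod_cast h
  have hΓ := Real.Gamma_add_nat_eq_mul_ascPochhammer (fun k => (by positivity : r + k ≠ 0)) j
  have hasc := (ascPochhammer_pos j r hr).ne'
  rw [descPochhammer_eval_eq_descFactorial, negBinPMF, negBinPMF, ← hfact, hΓ,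
    Real.rpow_add hq, Real.rpow_natCast, div_pow]
  push_cast
  rw [show r + (m + j : ℝ) = r + j + m by ring]
  field_simp
  ring

theorem hasSum_negBinPMF_mul_descPochhammer {r p : ℝ} (hr : 0 < r) (hp : |p| < 1) (j : ℕ) :
    HasSum (fun k : ℕ => negBinPMF r p k * (descPochhammer ℝ j).eval (k : ℝ))
      ((ascPochhammer ℝ j).eval r * (p / (1 - p)) ^ j) := by
  have hp1 : p < 1 := (le_abs_self p).trans_lt hp
  have hshift := (hasSum_negBinPMF (by positivity : 0 < r + j) hp).mul_left
    ((ascPochhammer ℝ j).eval r * (p / (1 - p)) ^ j)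
  rw [mul_one, ← funext (negBinPMF_add_mul_descPochhammer hr hp1 · j)] at hshift
  refine (hasSum_nat_add_iff' j).1 ?_
  rwa [sum_eq_zero fun k hk => ?_, sub_zero]
  rw [descPochhammer_eval_eq_descFactorial, Nat.descFactorial_eq_zero_iff_lt.2 (mem_range.1 hk),
    Nat.cast_zero, mul_zero]

theorem hasSum_negBinPMF_mul_sum_descPochhammer {r p : ℝ} (hr : 0 < r) (hp : |p| < 1)
    {n : ℕ} (c : Fin n → ℝ) :
    HasSum (fun k : ℕ => negBinPMF r p k * ∑ j, c j * (descPochhammer ℝ j).eval (k : ℝ))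
      (∑ j, c j * ((ascPochhammer ℝ j).eval r * (p / (1 - p)) ^ (j : ℕ))) := by
  simp only [mul_sum, mul_left_comm (negBinPMF r p _)]
  exact hasSum_sum fun j _ => (hasSum_negBinPMF_mul_descPochhammer hr hp j).mul_left (c j)

theorem hasSum_negBinPMF_mul_sub_pow_three {r p : ℝ} (hr : 0 < r) (hp : |p| < 1) :
    HasSum (fun k : ℕ => negBinPMF r p k * ((k : ℝ) - r * p / (1 - p)) ^ 3)
      (r * p / (1 - p) ^ 2 * ((1 + p) / (1 - p))) := by
  have hq : 1 - p ≠ 0 := by linarith [le_abs_self p]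
  set μ := r * p / (1 - p)
  have h := hasSum_negBinPMF_mul_sum_descPochhammer hr hp
    ![-μ ^ 3, 1 - 3 * μ + 3 * μ ^ 2, 3 - 3 * μ, 1]
  simp only [Fin.sum_univ_succ, Fin.sum_univ_zero, Matrix.cons_val_zero, Matrix.cons_val_succ,
    Fin.val_zero, Fin.val_succ, descPochhammer_zero, descPochhammer_succ_eval, ascPochhammer_zero,
    ascPochhammer_succ_eval, eval_one, zero_add, Nat.reduceAdd] at h
  convert h using 1
  · ext k
    ring
  · simp only [μ]
    field_simp
    ring

theorem exists_hasSum_negBinPMF_mul_sub_pow_six_le {p : ℝ} (hp0 : 0 < p) (hp1 : p < 1) :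
    ∃ C, 0 < C ∧ ∀ r : ℝ, 1 ≤ r → ∃ m ≤ C * r ^ 3,
      HasSum (fun k : ℕ => negBinPMF r p k * ((k : ℝ) - r * p / (1 - p)) ^ 6) m := by
  set t := p / (1 - p)
  have ht : 0 < t := div_pos hp0 (by linarith)
  set a₁ := t + 31 * t ^ 2 + 180 * t ^ 3 + 390 * t ^ 4 + 360 * t ^ 5 + 120 * t ^ 6
  set a₂ := 25 * t ^ 2 + 180 * t ^ 3 + 415 * t ^ 4 + 390 * t ^ 5 + 130 * t ^ 6
  set a₃ := 15 * t ^ 3 + 45 * t ^ 4 + 45 * t ^ 5 + 15 * t ^ 6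
  refine ⟨a₁ + a₂ + a₃, by positivity, fun r hr => ⟨r * a₁ + r ^ 2 * a₂ + r ^ 3 * a₃, ?_, ?_⟩⟩
  · have : 0 ≤ a₁ := by positivity
    have : 0 ≤ a₂ := by positivity
    nlinarith [pow_le_pow_right₀ hr (show 1 ≤ 3 by norm_num),
      pow_le_pow_right₀ hr (show 2 ≤ 3 by norm_num)]
  · have hμ : r * p / (1 - p) = r * t := by ring
    rw [hμ]
    set μ := r * t
    have h := hasSum_negBinPMF_mul_sum_descPochhammer (r := r) (by linarith)
      (abs_lt.2 ⟨by linarith, hp1⟩)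
      ![μ ^ 6, 1 - 6 * μ + 15 * μ ^ 2 - 20 * μ ^ 3 + 15 * μ ^ 4 - 6 * μ ^ 5,
        31 - 90 * μ + 105 * μ ^ 2 - 60 * μ ^ 3 + 15 * μ ^ 4, 90 - 150 * μ + 90 * μ ^ 2 - 20 * μ ^ 3,
        65 - 60 * μ + 15 * μ ^ 2, 15 - 6 * μ, 1]
    simp only [Fin.sum_univ_succ, Fin.sum_univ_zero, Matrix.cons_val_zero, Matrix.cons_val_succ,
      Fin.val_zero, Fin.val_succ, descPochhammer_zero, descPochhammer_succ_eval, ascPochhammer_zero,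
      ascPochhammer_succ_eval, eval_one, zero_add, Nat.reduceAdd] at h
    convert h using 1
    · ext k
      ring
    · simp only [μ, a₁, a₂, a₃]
      ring

theorem negBin_third_moment_on_event (p : ℝ) (hp0 : 0 < p) (hp1 : p < 1) :
    ∃ C : ℝ, 0 < C ∧ ∀ r : ℝ, 1 ≤ r → ∀ A : Set ℝ, MeasurableSet A →
      |(∑' k : ℕ, negBinPMF r p k * ((k : ℝ) - r * p / (1 - p)) ^ 3
          * A.indicator (fun _ => (1 : ℝ)) (k : ℝ))
        - r * p / (1 - p) ^ 2 * ((1 + p) / (1 - p))|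
        ≤ C * r ^ ((3 : ℝ) / 2)
            * Real.sqrt (∑' k : ℕ, negBinPMF r p k
                * Aᶜ.indicator (fun _ => (1 : ℝ)) (k : ℝ)) := by
  obtain ⟨C, hC, hsixth⟩ := exists_hasSum_negBinPMF_mul_sub_pow_six_le hp0 hp1
  refine ⟨√C, Real.sqrt_pos.2 hC, fun r hr A _ => ?_⟩
  have hr0 : 0 < r := by linarith
  have hp : |p| < 1 := abs_lt.2 ⟨by linarith, hp1⟩
  obtain ⟨m, hmC, hm⟩ := hsixth r hr
  obtain ⟨hsum, hCS⟩ := summable_and_abs_tsum_mul_indicator_le ((↑) ⁻¹' Aᶜ : Set ℕ)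
    (negBinPMF_nonneg hr0 hp0.le hp1.le) (hasSum_negBinPMF hr0 hp).summable
    (Y := fun k : ℕ => ((k : ℝ) - r * p / (1 - p)) ^ 3) (by simpa only [← pow_mul] using hm)
  have hAc : ∀ k : ℕ, Aᶜ.indicator (fun _ => (1 : ℝ)) k
      = ((↑) ⁻¹' Aᶜ : Set ℕ).indicator (fun _ => 1) k := fun k => rfl
  have hA : ∀ k : ℕ, A.indicator (fun _ => (1 : ℝ)) k = 1 - Aᶜ.indicator (fun _ => 1) k := by
    simp [Set.indicator_compl]
  have hsqrt : √(C * r ^ 3) = √C * r ^ ((3 : ℝ) / 2) := by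
    rw [Real.sqrt_mul hC.le, Real.sqrt_eq_rpow (r ^ 3), ← Real.rpow_natCast,
      ← Real.rpow_mul hr0.le]
    norm_num
  have hsplit := ((hasSum_negBinPMF_mul_sub_pow_three hr0 hp).sub hsum.hasSum).tsum_eq
  simp_rw [hA, hAc, mul_one_sub, hsplit, sub_sub_cancel_left, abs_neg, ← hsqrt]
  exact hCS.trans (by gcongr)
end

section
/- For fixed k ∈ ℕ and any c ∈ ℝ, with δ_x := (x - rp/q)/√(rp/q²) and φ the standard normal density, one has ∫_{δ_{k-1/2}}^{δ_{k+1/2}} φ(y) dy = (q/√(rp))·φ(δ_k)·(1 + (q²/(24rp))·(δ_k² - 1) + E), where |E| ≤ C_p·(1 + |δ_k|⁵)/r² for a constant C_p depending only on p, uniformly over k with |δ_k| ≤ r^{1/6}. -/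
/-!
Write `a = δ_k` and `T = q / (2√(rp))`, so that the cell is `[a - T, a + T]`, `q/√(rp) = 2T` and
`q²/(24rp) = T²/6`. Integrating the cubic Taylor expansion of `φ` about `a` over the cell, the odd
terms cancel and leave `2Tφ(a) + (T³/3)φ''(a)`, with error at most `2 sup|φ⁗| T⁵`. Here
`φ⁗(y) = (y⁴ - 6y² + 3)φ(y)`, and once `r` is large, `|a| ≤ r^{1/6}` gives `|a|T ≤ 1`, hence
`φ(y) ≤ e φ(a)` on the cell; the relative error is then `O((2 + |a|)⁴ T⁴) = O((1 + |a|⁵)/r²)`.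
For bounded `r` so is `a`, and the crude bound `φ ≤ φ(0)` on the cell suffices.
-/
open MeasureTheory

noncomputable def stdNormalPDF (y : ℝ) : ℝ :=
  Real.exp (-(y ^ 2) / 2) / Real.sqrt (2 * Real.pi)

open Real Set

section Taylor

variable {a T : ℝ}

lemma abs_le_mul_of_abs_deriv_le {u u' : ℝ → ℝ} {K x : ℝ}
    (hu : ∀ y, HasDerivAt u (u' y) y) (hua : u a = 0)
    (hK : ∀ y ∈ Icc (a - T) (a + T), |u' y| ≤ K) (hx : x ∈ Icc (a - T) (a + T)) :
    |u x| ≤ K * T := by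
  have hxa : |x - a| ≤ T := abs_sub_le_iff.2 ⟨by linarith [hx.2], by linarith [hx.1]⟩
  have ha : a ∈ Icc (a - T) (a + T) := ⟨by linarith [hx.1, hx.2], by linarith [hx.1, hx.2]⟩
  have hmvt := (convex_Icc (a - T) (a + T)).norm_image_sub_le_of_norm_hasDerivWithin_le
    (fun y _ => (hu y).hasDerivWithinAt) hK ha hx
  rw [hua, sub_zero, Real.norm_eq_abs, Real.norm_eq_abs] at hmvt
  exact hmvt.trans (mul_le_mul_of_nonneg_left hxa ((abs_nonneg _).trans (hK a ha)))

variable {f f₁ f₂ f₃ f₄ : ℝ → ℝ} {M : ℝ}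

theorem abs_sub_taylor_three_le (hf : ∀ y, HasDerivAt f (f₁ y) y)
    (hf₁ : ∀ y, HasDerivAt f₁ (f₂ y) y) (hf₂ : ∀ y, HasDerivAt f₂ (f₃ y) y)
    (hf₃ : ∀ y, HasDerivAt f₃ (f₄ y) y) (hM : ∀ y ∈ Icc (a - T) (a + T), |f₄ y| ≤ M)
    {x : ℝ} (hx : x ∈ Icc (a - T) (a + T)) :
    |f x - (f a + (x - a) * f₁ a + (x - a) ^ 2 / 2 * f₂ a + (x - a) ^ 3 / 6 * f₃ a)|
      ≤ M * T ^ 4 := by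
  have hX (y : ℝ) : HasDerivAt (fun x => x - a) 1 y := (hasDerivAt_id' y).sub_const a
  have h₃ : ∀ x ∈ Icc (a - T) (a + T), |f₃ x - f₃ a| ≤ M * T := fun x hx =>
    abs_le_mul_of_abs_deriv_le (u := fun y => f₃ y - f₃ a) (fun y => (hf₃ y).sub_const _)
      (sub_self _) hM hx
  have h₂ : ∀ x ∈ Icc (a - T) (a + T), |f₂ x - (f₂ a + (x - a) * f₃ a)| ≤ M * T * T :=
    fun x hx => abs_le_mul_of_abs_deriv_le
      (u := fun y => f₂ y - (f₂ a + (y - a) * f₃ a)) (u' := fun y => f₃ y - f₃ a)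
      (fun y => ((hf₂ y).sub (((hX y).mul_const (f₃ a)).const_add (f₂ a))).congr_deriv
        (by ring))
      (by simp) h₃ hx
  have h₁ : ∀ x ∈ Icc (a - T) (a + T),
      |f₁ x - (f₁ a + (x - a) * f₂ a + (x - a) ^ 2 / 2 * f₃ a)| ≤ M * T * T * T :=
    fun x hx => abs_le_mul_of_abs_deriv_le
      (u := fun y => f₁ y - (f₁ a + (y - a) * f₂ a + (y - a) ^ 2 / 2 * f₃ a))
      (u' := fun y => f₂ y - (f₂ a + (y - a) * f₃ a))
      (fun y => ((hf₁ y).sub ((((hX y).mul_const (f₂ a)).const_add (f₁ a)).add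
        ((((hX y).pow 2).div_const 2).mul_const (f₃ a)))).congr_deriv (by push_cast; ring))
      (by simp) h₂ hx
  have h₀ := abs_le_mul_of_abs_deriv_le
    (u := fun y =>
      f y - (f a + (y - a) * f₁ a + (y - a) ^ 2 / 2 * f₂ a + (y - a) ^ 3 / 6 * f₃ a))
    (u' := fun y => f₁ y - (f₁ a + (y - a) * f₂ a + (y - a) ^ 2 / 2 * f₃ a))
    (fun y => ((hf y).sub (((((hX y).mul_const (f₁ a)).const_add (f a)).add
      ((((hX y).pow 2).div_const 2).mul_const (f₂ a))).add
      ((((hX y).pow 3).div_const 6).mul_const (f₃ a)))).congr_deriv (by push_cast; ring))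
    (by simp) h₁ hx
  exact h₀.trans_eq (by ring)

theorem abs_integral_sub_midpoint_le (hf : ∀ y, HasDerivAt f (f₁ y) y)
    (hf₁ : ∀ y, HasDerivAt f₁ (f₂ y) y) (hf₂ : ∀ y, HasDerivAt f₂ (f₃ y) y)
    (hf₃ : ∀ y, HasDerivAt f₃ (f₄ y) y) (hM : ∀ y ∈ Icc (a - T) (a + T), |f₄ y| ≤ M)
    (hT : 0 ≤ T) :
    |(∫ x in (a - T)..(a + T), f x) - (2 * T * f a + T ^ 3 / 3 * f₂ a)| ≤ 2 * M * T ^ 5 := by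
  set P : ℝ → ℝ := fun x =>
    f a + (x - a) * f₁ a + (x - a) ^ 2 / 2 * f₂ a + (x - a) ^ 3 / 6 * f₃ a
  have hPcont : Continuous P := by fun_prop
  have hfcont : Continuous f := continuous_iff_continuousAt.2 fun y => (hf y).continuousAt
  have hX (y : ℝ) : HasDerivAt (fun x => x - a) 1 y := (hasDerivAt_id' y).sub_const a
  have hPint : ∫ x in (a - T)..(a + T), P x = 2 * T * f a + T ^ 3 / 3 * f₂ a := by
    rw [intervalIntegral.integral_eq_sub_of_hasDerivAt
      (f := fun x => x * f a + (x - a) ^ 2 / 2 * f₁ a + (x - a) ^ 3 / 6 * f₂ a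
        + (x - a) ^ 4 / 24 * f₃ a)
      (fun y _ => (((((hasDerivAt_id' y).mul_const (f a)).add
        (((hX y).pow 2).div_const 2 |>.mul_const (f₁ a))).add
        (((hX y).pow 3).div_const 6 |>.mul_const (f₂ a))).add
        (((hX y).pow 4).div_const 24 |>.mul_const (f₃ a))).congr_deriv (by push_cast; ring))
      (hPcont.intervalIntegrable _ _)]
    ring
  rw [← hPint, ← intervalIntegral.integral_sub (hfcont.intervalIntegrable _ _)
    (hPcont.intervalIntegrable _ _)]
  have hbound := intervalIntegral.norm_integral_le_of_norm_le_const (a := a - T) (b := a + T)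
    (f := fun x => f x - P x) (C := M * T ^ 4) fun x hx =>
      abs_sub_taylor_three_le hf hf₁ hf₂ hf₃ hM
        (Ioc_subset_Icc_self (uIoc_of_le (by linarith : a - T ≤ a + T) ▸ hx))
  rw [Real.norm_eq_abs, show a + T - (a - T) = 2 * T by ring,
    abs_of_nonneg (by linarith : 0 ≤ 2 * T)] at hbound
  exact hbound.trans_eq (by ring)

end Taylor

lemma stdNormalPDF_pos (y : ℝ) : 0 < stdNormalPDF y := by
  unfold stdNormalPDF; positivity

lemma hasDerivAt_stdNormalPDF (y : ℝ) : HasDerivAt stdNormalPDF (-y * stdNormalPDF y) y := by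
  have h := (((hasDerivAt_pow 2 y).neg.div_const 2).exp).div_const (√(2 * π))
  refine h.congr_deriv ?_
  simp only [Pi.neg_apply, stdNormalPDF]
  push_cast
  ring

lemma HasDerivAt.mul_stdNormalPDF {g : ℝ → ℝ} {g' y : ℝ} (hg : HasDerivAt g g' y) :
    HasDerivAt (fun y => g y * stdNormalPDF y) ((g' - y * g y) * stdNormalPDF y) y :=
  (hg.mul (hasDerivAt_stdNormalPDF y)).congr_deriv (by ring)

theorem abs_integral_stdNormalPDF_sub_midpoint_le {a T M : ℝ}
    (hM : ∀ y ∈ Icc (a - T) (a + T), |(y ^ 4 - 6 * y ^ 2 + 3) * stdNormalPDF y| ≤ M)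
    (hT : 0 ≤ T) :
    |(∫ y in (a - T)..(a + T), stdNormalPDF y)
        - (2 * T * stdNormalPDF a + T ^ 3 / 3 * ((a ^ 2 - 1) * stdNormalPDF a))|
      ≤ 2 * M * T ^ 5 := by
  have h₁ (y : ℝ) : HasDerivAt (fun y => -y * stdNormalPDF y) ((y ^ 2 - 1) * stdNormalPDF y) y :=
    (hasDerivAt_neg' y).mul_stdNormalPDF.congr_deriv (by ring)
  have h₂ (y : ℝ) : HasDerivAt (fun y => (y ^ 2 - 1) * stdNormalPDF y)
      ((3 * y - y ^ 3) * stdNormalPDF y) y :=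
    ((hasDerivAt_pow 2 y).sub_const 1).mul_stdNormalPDF.congr_deriv (by push_cast; ring)
  have h₃ (y : ℝ) : HasDerivAt (fun y => (3 * y - y ^ 3) * stdNormalPDF y)
      ((y ^ 4 - 6 * y ^ 2 + 3) * stdNormalPDF y) y := by
    have hp : HasDerivAt (fun y : ℝ => 3 * y - y ^ 3) (3 - 3 * y ^ 2) y :=
      (((hasDerivAt_id' y).const_mul 3).sub (hasDerivAt_pow 3 y)).congr_deriv
        (by push_cast; ring)
    exact hp.mul_stdNormalPDF.congr_deriv (by ring)
  exact abs_integral_sub_midpoint_le hasDerivAt_stdNormalPDF h₁ h₂ h₃ hM hT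

lemma stdNormalPDF_le_exp_mul {a y B : ℝ} (h : a ^ 2 - y ^ 2 ≤ 2 * B) :
    stdNormalPDF y ≤ exp B * stdNormalPDF a := by
  unfold stdNormalPDF
  rw [← mul_div_assoc, ← exp_add]
  gcongr
  linarith

lemma abs_hermite_four_le (y : ℝ) : |y ^ 4 - 6 * y ^ 2 + 3| ≤ 3 * (1 + |y|) ^ 4 := by
  have h2 : y ^ 2 = |y| ^ 2 := (sq_abs y).symm
  have h4 : y ^ 4 = |y| ^ 4 := (pow_abs y 4).symm ▸ (abs_of_nonneg (by positivity)).symm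
  have hy := abs_nonneg y
  rw [h2, h4, abs_le]
  constructor <;> nlinarith [pow_nonneg hy 3, pow_nonneg hy 4, sq_nonneg (|y|)]

noncomputable def cellIntegralError (a T : ℝ) : ℝ :=
  (∫ y in (a - T)..(a + T), stdNormalPDF y) / (2 * T * stdNormalPDF a)
    - 1 - T ^ 2 / 6 * (a ^ 2 - 1)

section CellIntegralError

variable {a T : ℝ}

lemma abs_cellIntegralError_le_of_mul_le_one (hT0 : 0 < T) (hT1 : T ≤ 1) (haT : |a| * T ≤ 1) :
    |cellIntegralError a T| ≤ 3 * exp 1 * (2 + |a|) ^ 4 * T ^ 4 := by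
  have hφa := stdNormalPDF_pos a
  have hM : ∀ y ∈ Icc (a - T) (a + T),
      |(y ^ 4 - 6 * y ^ 2 + 3) * stdNormalPDF y|
        ≤ 3 * (2 + |a|) ^ 4 * (exp 1 * stdNormalPDF a) := by
    intro y hy
    have hya : |y - a| ≤ T := abs_sub_le_iff.2 ⟨by linarith [hy.2], by linarith [hy.1]⟩
    have hy : |y| ≤ |a| + 1 := by linarith [abs_sub_abs_le_abs_sub y a]
    have hpoly : |y ^ 4 - 6 * y ^ 2 + 3| ≤ 3 * (2 + |a|) ^ 4 :=
      (abs_hermite_four_le y).trans (by gcongr 3 * ?_ ^ 4; linarith)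
    have hφ : stdNormalPDF y ≤ exp 1 * stdNormalPDF a := by
      refine stdNormalPDF_le_exp_mul ?_
      have := mul_le_mul_of_nonneg_left hya (abs_nonneg a)
      -- a² - y² = -(y - a)² - 2a(y - a)
      nlinarith [neg_abs_le (a * (y - a)), abs_mul a (y - a), sq_nonneg (y - a)]
    rw [abs_mul, abs_of_pos (stdNormalPDF_pos y)]
    exact mul_le_mul hpoly hφ (stdNormalPDF_pos y).le (by positivity)
  have hmid := abs_integral_stdNormalPDF_sub_midpoint_le hM hT0.le
  have hE : cellIntegralError a T = ((∫ y in (a - T)..(a + T), stdNormalPDF y)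
      - (2 * T * stdNormalPDF a + T ^ 3 / 3 * ((a ^ 2 - 1) * stdNormalPDF a)))
        / (2 * T * stdNormalPDF a) := by
    unfold cellIntegralError; field_simp; ring
  rw [hE, abs_div, abs_of_pos (by positivity : 0 < 2 * T * stdNormalPDF a),
    div_le_iff₀ (by positivity)]
  exact hmid.trans_eq (by ring)

lemma abs_cellIntegralError_le (hT0 : 0 < T) :
    |cellIntegralError a T| ≤ exp (a ^ 2 / 2) + 1 + T ^ 2 / 6 * (a ^ 2 + 1) := by
  have hφa := stdNormalPDF_pos a
  have hI := intervalIntegral.norm_integral_le_of_norm_le_const (a := a - T) (b := a + T)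
    (f := stdNormalPDF) (C := exp (a ^ 2 / 2) * stdNormalPDF a) fun y _ => by
      rw [Real.norm_of_nonneg (stdNormalPDF_pos y).le]
      exact stdNormalPDF_le_exp_mul (by nlinarith [sq_nonneg y])
  rw [Real.norm_eq_abs, show a + T - (a - T) = 2 * T by ring,
    abs_of_pos (by linarith : 0 < 2 * T)] at hI
  have hmain : |(∫ y in (a - T)..(a + T), stdNormalPDF y) / (2 * T * stdNormalPDF a)|
      ≤ exp (a ^ 2 / 2) := by
    rw [abs_div, abs_of_pos (by positivity : 0 < 2 * T * stdNormalPDF a),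
      div_le_iff₀ (by positivity)]
    exact hI.trans_eq (by ring)
  have hcorr : |T ^ 2 / 6 * (a ^ 2 - 1)| ≤ T ^ 2 / 6 * (a ^ 2 + 1) := by
    rw [abs_mul, abs_of_nonneg (by positivity)]
    gcongr
    exact abs_le.2 ⟨by nlinarith, by linarith⟩
  unfold cellIntegralError
  rw [abs_le] at hmain hcorr ⊢
  constructor <;> linarith [hmain.1, hmain.2, hcorr.1, hcorr.2]

end CellIntegralError

lemma two_add_pow_four_le {t : ℝ} (ht : 0 ≤ t) : (2 + t) ^ 4 ≤ 81 * (1 + t ^ 5) := by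
  rcases le_total t 1 with h | h
  · have : (2 + t) ^ 4 ≤ 3 ^ 4 := by gcongr; linarith
    nlinarith [pow_nonneg ht 5]
  · have : (2 + t) ^ 4 ≤ (3 * t) ^ 4 := by gcongr; linarith
    nlinarith [pow_le_pow_right₀ h (by norm_num : 4 ≤ 5)]

section Rescaled

variable {a c r : ℝ}

lemma div_sqrt_sq (hr : 0 < r) : (c / √r) ^ 2 = c ^ 2 / r := by
  rw [div_pow, sq_sqrt hr.le]

lemma abs_cellIntegralError_div_sqrt_le_of_large (hc : 0 < c) (hr : 1 + c ^ 2 + c ^ 6 ≤ r)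
    (ha : |a| ^ 6 ≤ r) :
    |cellIntegralError a (c / √r)| ≤ 243 * exp 1 * c ^ 4 * (1 + |a| ^ 5) / r ^ 2 := by
  have hr0 : 0 < r := by nlinarith [pow_nonneg hc.le 6]
  have hT0 : 0 < c / √r := by positivity
  have hT1 : c / √r ≤ 1 := by
    rw [← pow_le_one_iff_of_nonneg hT0.le two_ne_zero, div_sqrt_sq hr0, div_le_one hr0]
    nlinarith [pow_nonneg hc.le 6]
  have haT : |a| * (c / √r) ≤ 1 := by
    rw [← pow_le_one_iff_of_nonneg (by positivity) (by norm_num : 6 ≠ 0), mul_pow,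
      show (c / √r) ^ 6 = ((c / √r) ^ 2) ^ 3 by ring, div_sqrt_sq hr0]
    calc |a| ^ 6 * (c ^ 2 / r) ^ 3 ≤ r * (c ^ 2 / r) ^ 3 := by gcongr
      _ = c ^ 6 / r ^ 2 := by field_simp
      _ ≤ 1 := by rw [div_le_one (by positivity)]; nlinarith [pow_nonneg hc.le 6]
  calc |cellIntegralError a (c / √r)| ≤ 3 * exp 1 * (2 + |a|) ^ 4 * (c / √r) ^ 4 :=
        abs_cellIntegralError_le_of_mul_le_one hT0 hT1 haT
    _ ≤ 3 * exp 1 * (81 * (1 + |a| ^ 5)) * (c ^ 2 / r) ^ 2 := by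
        rw [show (c / √r) ^ 4 = ((c / √r) ^ 2) ^ 2 by ring, div_sqrt_sq hr0]
        gcongr
        exact two_add_pow_four_le (abs_nonneg a)
    _ = 243 * exp 1 * c ^ 4 * (1 + |a| ^ 5) / r ^ 2 := by field_simp; ring

lemma abs_cellIntegralError_div_sqrt_le_of_bounded {R : ℝ} (hc : 0 < c) (hr : 0 < r) (hR : 1 ≤ R)
    (hrR : r ≤ R) (ha : |a| ^ 6 ≤ r) :
    |cellIntegralError a (c / √r)|
      ≤ ((exp (R / 2) + 1) * R ^ 2 + c ^ 2 * (R + 1) / 6 * R) / r ^ 2 := by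
  have ha2 : a ^ 2 ≤ R := by
    rw [← sq_abs]
    rcases le_total |a| 1 with h | h
    · nlinarith [abs_nonneg a]
    · linarith [pow_le_pow_right₀ h (by norm_num : 2 ≤ 6)]
  calc |cellIntegralError a (c / √r)|
        ≤ exp (a ^ 2 / 2) + 1 + (c / √r) ^ 2 / 6 * (a ^ 2 + 1) :=
        abs_cellIntegralError_le (by positivity)
    _ ≤ exp (R / 2) + 1 + c ^ 2 / r / 6 * (R + 1) := by rw [div_sqrt_sq hr]; gcongr
    _ = ((exp (R / 2) + 1) * r ^ 2 + c ^ 2 * (R + 1) / 6 * r) / r ^ 2 := by field_simp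
    _ ≤ _ := by gcongr

theorem exists_abs_cellIntegralError_div_sqrt_le (hc : 0 < c) :
    ∃ C, 0 < C ∧ ∀ r, 0 < r → ∀ a, |a| ^ 6 ≤ r →
      |cellIntegralError a (c / √r)| ≤ C * (1 + |a| ^ 5) / r ^ 2 := by
  set R := 1 + c ^ 2 + c ^ 6
  have hR : 1 ≤ R := by linarith [sq_nonneg c, pow_nonneg (sq_nonneg c) 3]
  set C₁ := (exp (R / 2) + 1) * R ^ 2 + c ^ 2 * (R + 1) / 6 * R
  set C₂ := 243 * exp 1 * c ^ 4
  have hC₁ : 0 < C₁ := by positivity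
  have hC₂ : 0 < C₂ := by positivity
  refine ⟨C₁ + C₂, by positivity, fun r hr a ha => ?_⟩
  have h5 : 1 ≤ 1 + |a| ^ 5 := by simp [abs_nonneg]
  rcases le_or_gt R r with hRr | hrR
  · calc |cellIntegralError a (c / √r)| ≤ C₂ * (1 + |a| ^ 5) / r ^ 2 :=
          abs_cellIntegralError_div_sqrt_le_of_large hc hRr ha
      _ ≤ (C₁ + C₂) * (1 + |a| ^ 5) / r ^ 2 := by gcongr; linarith
  · calc |cellIntegralError a (c / √r)| ≤ C₁ / r ^ 2 :=
          abs_cellIntegralError_div_sqrt_le_of_bounded hc hr hR hrR.le ha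
      _ ≤ (C₁ + C₂) * (1 + |a| ^ 5) / r ^ 2 := by gcongr; nlinarith

end Rescaled

theorem gaussian_cell_integral_expansion (p : ℝ) (hp0 : 0 < p) (hp1 : p < 1) :
    ∃ C : ℝ, 0 < C ∧ ∀ r : ℝ, 0 < r → ∀ k : ℕ,
      let q := 1 - p
      let δ : ℝ → ℝ := fun x => (x - r * p / q) / Real.sqrt (r * p / q ^ 2)
      |δ (k : ℝ)| ≤ r ^ ((1 : ℝ) / 6) →
        ∃ E : ℝ,
          (∫ y in Set.Ioc (δ ((k : ℝ) - 1 / 2)) (δ ((k : ℝ) + 1 / 2)), stdNormalPDF y)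
            = q / Real.sqrt (r * p) * stdNormalPDF (δ (k : ℝ))
              * (1 + q ^ 2 / (24 * r * p) * ((δ (k : ℝ)) ^ 2 - 1) + E) ∧
          |E| ≤ C * (1 + |δ (k : ℝ)| ^ 5) / r ^ 2 := by
  have hq : 0 < 1 - p := by linarith
  obtain ⟨C, hC, hE⟩ :=
    exists_abs_cellIntegralError_div_sqrt_le (by positivity : 0 < (1 - p) / (2 * √p))
  refine ⟨C, hC, ?_⟩
  intro r hr k q δ hk
  set a := δ k
  set T := (1 - p) / (2 * √p) / √r
  have hsqrt : √(r * p) = √r * √p := sqrt_mul hr.le p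
  have hT : 0 < T := by positivity
  have hδ : δ (k - 1 / 2) = a - T ∧ δ (k + 1 / 2) = a + T := by
    constructor <;>
    · simp only [δ, a, T, q, sqrt_div' _ (sq_nonneg (1 - p)), sqrt_sq hq.le, hsqrt]
      field_simp
      ring
  have ha6 : |a| ^ 6 ≤ r := by
    calc |a| ^ 6 ≤ (r ^ ((1 : ℝ) / 6)) ^ 6 := by gcongr
      _ = r := by rw [← rpow_natCast, ← rpow_mul hr.le]; norm_num
  have hcoeff : q / √(r * p) = 2 * T ∧ q ^ 2 / (24 * r * p) = T ^ 2 / 6 := by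
    constructor
    · simp only [q, T, hsqrt]
      field_simp
    · simp only [q, T, div_pow, mul_pow, sq_sqrt hr.le, sq_sqrt hp0.le]
      field_simp
      ring
  refine ⟨cellIntegralError a T, ?_, hE r hr a ha6⟩
  rw [hδ.1, hδ.2, ← intervalIntegral.integral_of_le (by linarith), hcoeff.1, hcoeff.2,
    cellIntegralError, show ∀ x y : ℝ, 1 + x + (y - 1 - x) = y by intros; ring,
    mul_div_cancel₀ _ (mul_pos (by positivity) (stdNormalPDF_pos a)).ne']
end
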